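/- arXiv:1703.08363 — 2 statements merged into one kernel-verified Lean document; each statement's English description precedes it below -/
import Mathlib

section
/- Let p be a prime and let P be a finite p-group with subgroups A and B such that P = AB (every element of P is a product ab with a ∈ A, b ∈ B). Suppose that p² does not divide the conjugacy class size |x^P| for every x ∈ A ∪ B. Then the derived subgroup P' is contained in the Frattini subgroup Φ(P), Φ(P) is contained in the center Z(P), P' is elementary abelian, and |P'| ≤ p². -/
open Pointwise

/-- The conjugacy class size of `x`: the index of its centralizer. -/
noncomputable def classSize {G : Type*} [Group G] (x : G) : ℕ := (Subgroup.centralizer {x}).index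

/-- `G = AB`: every element of the ambient group is a product of an element of `A`
and an element of `B`. -/
def IsFactorization {G : Type*} [Group G] (A B : Subgroup G) : Prop :=
  ∀ g : G, ∃ a ∈ A, ∃ b ∈ B, g = a * b

/-- `A` and `B` are mutually permutable: `A` permutes with every subgroup of `B`
and `B` permutes with every subgroup of `A`. -/
def MutuallyPermutable {G : Type*} [Group G] (A B : Subgroup G) : Prop :=
  (∀ X : Subgroup G, X ≤ B → (A : Set G) * (X : Set G) = (X : Set G) * (A : Set G)) ∧
  (∀ X : Subgroup G, X ≤ A → (B : Set G) * (X : Set G) = (X : Set G) * (B : Set G))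

/-- `x` has prime power order. -/
def HasPrimePowerOrder {G : Type*} [Group G] (x : G) : Prop :=
  ∃ q n : ℕ, q.Prime ∧ orderOf x = q ^ n

/-- `G` is `p`-nilpotent: it has a normal Hall `p'`-subgroup (a normal `p`-complement). -/
def IsPNilpotent (p : ℕ) (G : Type*) [Group G] : Prop :=
  ∃ H : Subgroup G, H.Normal ∧ ¬ p ∣ Nat.card H ∧ ∃ n : ℕ, H.index = p ^ n

/-- A group is elementary abelian (for the prime `p`) if it is abelian and every
nontrivial element has order `p`. -/
def IsElementaryAbelian (p : ℕ) (P : Type*) [Group P] : Prop :=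
  (∀ a b : P, a * b = b * a) ∧ ∀ a : P, a ≠ 1 → orderOf a = p

/-- `K` is the `p`-core `O_p(G)`: the largest normal `p`-subgroup of `G`. -/
def IsPCore (p : ℕ) {G : Type*} [Group G] (K : Subgroup G) : Prop :=
  K.Normal ∧ IsPGroup p K ∧ ∀ L : Subgroup G, L.Normal → IsPGroup p L → L ≤ K

/-- `F` is the Fitting subgroup of `G`: the largest normal nilpotent subgroup. -/
def IsFittingSubgroup {G : Type*} [Group G] (F : Subgroup G) : Prop :=
  F.Normal ∧ Group.IsNilpotent F ∧
    ∀ L : Subgroup G, L.Normal → Group.IsNilpotent L → L ≤ F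

/-- A group is supersoluble if it has a normal series all of whose factors are cyclic:
there is a monotone chain of normal subgroups from `⊥` to `⊤` such that each
`H (i+1)` is generated by `H i` together with a single element (i.e. each factor
`H (i+1) / H i` is cyclic). -/
def IsSupersoluble (G : Type*) [Group G] : Prop :=
  ∃ (n : ℕ) (H : Fin (n + 1) → Subgroup G),
    Monotone H ∧ H 0 = ⊥ ∧ H (Fin.last n) = ⊤ ∧ (∀ i, (H i).Normal) ∧
    ∀ i : Fin n, ∃ x ∈ H i.succ, H i.succ ≤ H i.castSucc ⊔ Subgroup.zpowers x

/-- A group is `p`-soluble if it has a normal series each of whose factors is either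
a `p`-group or a `p'`-group (the order of the factor `H (i+1) / H i` is the relative
index `(H i).relIndex (H (i+1))`). -/
def IsPSoluble (p : ℕ) (G : Type*) [Group G] : Prop :=
  ∃ (n : ℕ) (H : Fin (n + 1) → Subgroup G),
    Monotone H ∧ H 0 = ⊥ ∧ H (Fin.last n) = ⊤ ∧ (∀ i, (H i).Normal) ∧
    ∀ i : Fin n, (∃ k : ℕ, (H i.castSucc).relIndex (H i.succ) = p ^ k) ∨
      ¬ p ∣ (H i.castSucc).relIndex (H i.succ)

/-- A group is `p`-supersoluble if it has a normal series each of whose factors is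
either a `p'`-group or cyclic of order `p`. -/
def IsPSupersoluble (p : ℕ) (G : Type*) [Group G] : Prop :=
  ∃ (n : ℕ) (H : Fin (n + 1) → Subgroup G),
    Monotone H ∧ H 0 = ⊥ ∧ H (Fin.last n) = ⊤ ∧ (∀ i, (H i).Normal) ∧
    ∀ i : Fin n, (H i.castSucc).relIndex (H i.succ) = p ∨
      ¬ p ∣ (H i.castSucc).relIndex (H i.succ)

/-!
Every `x ∈ A ∪ B` has class size `1` or `p`, so its centralizer is `P` or a maximal subgroup, and
contains `Φ(P)`; as `P = AB`, `Φ(P)` is central, and `P' ≤ Φ(P)` as in any nilpotent group. So `P`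
has class at most two, `y ↦ ⁅x, y⁆` is a homomorphism, and its image `[x, P]` has order dividing `p`
for `x ∈ A ∪ B`. Two such images that meet nontrivially coincide; this forces all `[a, P]` with
`a ∈ A` into one subgroup of order `p`, and likewise for `B`. Since `⁅a * b, y⁆ = ⁅a, y⁆ * ⁅b, y⁆`,
`P'` lies in the product of these two central subgroups of exponent `p`.
-/

open scoped commutatorElement

open Subgroup

section

variable {G : Type*} [Group G]

theorem Subgroup.isCoatom_of_index_prime {H : Subgroup G} (hH : H.index.Prime) : IsCoatom H := by
  refine ⟨fun h => ?_, fun K hK => ?_⟩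
  · rw [h, index_top] at hH
    exact Nat.not_prime_one hH
  · rw [← relIndex_mul_index hK.le] at hH
    rcases Nat.prime_mul_iff.mp hH with ⟨-, h⟩ | ⟨-, h⟩
    · exact index_eq_one.mp h
    · exact absurd (relIndex_eq_one.mp h) hK.not_ge

theorem frattini_le_of_index_dvd_prime {p : ℕ} (hp : p.Prime) {H : Subgroup G}
    (h : H.index ∣ p) : frattini G ≤ H := by
  rcases (Nat.dvd_prime hp).mp h with h | h
  · rw [index_eq_one.mp h]
    exact le_top
  · exact frattini_le_coatom (isCoatom_of_index_prime (h ▸ hp))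

/-- A maximal subgroup `M` of a nilpotent group is normal, and `M ⊔ ⟨g⟩ = G` for any `g ∉ M`,
so `G / M` is a quotient of the abelian group `⟨g⟩`. -/
theorem commutator_le_frattini [Group.IsNilpotent G] : commutator G ≤ frattini G := by
  refine le_iInf₂ fun M hM => ?_
  have : M.Normal := Group.normalizerCondition_of_isNilpotent.normal_of_coatom M hM
  obtain ⟨g, -, hg⟩ := SetLike.exists_of_lt hM.lt_top
  exact Normal.commutator_le_of_self_sup_commutative_eq_top
    (hM.2 _ (left_lt_sup.mpr (mt zpowers_le.mp hg))) inferInstance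

theorem IsPGroup.index_dvd_of_not_sq_dvd {p : ℕ} [Fact p.Prime]
    (hG : IsPGroup p G) (H : Subgroup G) [H.FiniteIndex] (h : ¬ p ^ 2 ∣ H.index) :
    H.index ∣ p := by
  obtain ⟨n, hn⟩ := hG.index H
  rw [hn] at h ⊢
  refine (pow_dvd_pow p (?_ : n ≤ 1)).trans (pow_one p).dvd
  by_contra hn
  exact h (pow_dvd_pow p (by omega))

theorem Subgroup.eq_zpowers_of_card_dvd_prime {p : ℕ} (hp : p.Prime)
    {H : Subgroup G} (hH : Nat.card H ∣ p) {w : G} (hw : w ∈ H) (hw1 : w ≠ 1) :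
    H = zpowers w := by
  have : Finite H := Nat.finite_of_card_ne_zero (ne_zero_of_dvd_ne_zero hp.ne_zero hH)
  have hord : orderOf w = p :=
    ((Nat.dvd_prime hp).mp ((H.orderOf_dvd_natCard hw).trans hH)).resolve_left
      (mt orderOf_eq_one_iff.mp hw1)
  refine (eq_of_le_of_card_ge (zpowers_le.mpr hw) ?_).symm
  rw [Nat.card_zpowers, hord]
  exact Nat.le_of_dvd hp.pos hH

theorem Subgroup.pow_eq_one_of_card_dvd {n : ℕ} {H : Subgroup G}
    (hH : Nat.card H ∣ n) {w : G} (hw : w ∈ H) : w ^ n = 1 :=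
  orderOf_dvd_iff_pow_eq_one.mp ((H.orderOf_dvd_natCard hw).trans hH)

theorem Subgroup.normal_of_le_center {C : Subgroup G} (hC : C ≤ center G) :
    C.Normal :=
  ⟨fun c hc g => by rwa [mem_center_iff.mp (hC hc) g, mul_inv_cancel_right]⟩

theorem Subgroup.card_sup_le (C D : Subgroup G) [C.Normal] :
    Nat.card ↥(C ⊔ D) ≤ Nat.card C * Nat.card D := by
  change Nat.card ((C ⊔ D : Subgroup G) : Set G) ≤ _
  rw [normal_mul]
  exact Set.natCard_mul_le

theorem Subgroup.pow_eq_one_of_mem_sup {n : ℕ} {C D : Subgroup G}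
    (hC : C ≤ center G) (hCn : ∀ c ∈ C, c ^ n = 1) (hDn : ∀ d ∈ D, d ^ n = 1)
    {w : G} (hw : w ∈ C ⊔ D) : w ^ n = 1 := by
  have := normal_of_le_center hC
  rw [← SetLike.mem_coe, normal_mul] at hw
  obtain ⟨c, hc, d, hd, rfl⟩ := hw
  rw [Commute.mul_pow (mem_center_iff.mp (hC hc) d).symm, hCn c hc, hDn d hd, one_mul]

theorem isElementaryAbelian_of_le_center {p : ℕ} (hp : p.Prime)
    {H : Subgroup G} (hH : H ≤ center G) (hpow : ∀ w ∈ H, w ^ p = 1) :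
    IsElementaryAbelian p H := by
  refine ⟨fun u v => Subtype.ext (mem_center_iff.mp (hH v.2) u), fun u hu => ?_⟩
  have : Fact p.Prime := ⟨hp⟩
  rw [← orderOf_coe]
  exact orderOf_eq_prime (hpow u u.2) (by simpa using hu)

theorem commutatorElement_mem_center (hZ : commutator G ≤ center G) (x y : G) :
    ⁅x, y⁆ ∈ center G :=
  hZ (commutator_mem_commutator (mem_top x) (mem_top y))

theorem commutatorElement_mul_left_of_central (hZ : commutator G ≤ center G) (x x' y : G) :
    ⁅x * x', y⁆ = ⁅x, y⁆ * ⁅x', y⁆ := by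
  rw [commutatorElement_mul_left_eq_conj_mul,
    mem_center_iff.mp (commutatorElement_mem_center hZ x' y) x, mul_inv_cancel_right,
    mem_center_iff.mp (commutatorElement_mem_center hZ x' y)]

theorem commutatorElement_mul_right_of_central (hZ : commutator G ≤ center G) (x y y' : G) :
    ⁅x, y * y'⁆ = ⁅x, y⁆ * ⁅x, y'⁆ := by
  rw [commutatorElement_mul_right_eq_mul_conj, mul_assoc _ y,
    mem_center_iff.mp (commutatorElement_mem_center hZ x y') y, ← mul_assoc, mul_inv_cancel_right]

def commutatorHom (hZ : commutator G ≤ center G) (x : G) : G →* G where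
  toFun y := ⁅x, y⁆
  map_one' := commutatorElement_one_right x
  map_mul' := commutatorElement_mul_right_of_central hZ x

section CentralCommutators

variable (hZ : commutator G ≤ center G)

@[simp]
theorem commutatorHom_apply (x y : G) : commutatorHom hZ x y = ⁅x, y⁆ := rfl

theorem commutatorElement_mem_range_commutatorHom (x y : G) :
    ⁅x, y⁆ ∈ (commutatorHom hZ x).range :=
  ⟨y, rfl⟩

theorem commutatorElement_mem_range_commutatorHom_right (x y : G) :
    ⁅x, y⁆ ∈ (commutatorHom hZ y).range := by
  rw [← commutatorElement_inv]
  exact inv_mem ⟨x, rfl⟩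

theorem range_commutatorHom_le_center (x : G) : (commutatorHom hZ x).range ≤ center G := by
  rintro _ ⟨y, rfl⟩
  exact commutatorElement_mem_center hZ x y

theorem card_range_commutatorHom (x : G) :
    Nat.card (commutatorHom hZ x).range = (centralizer {x}).index := by
  rw [← index_ker]
  congr 1
  ext y
  rw [MonoidHom.mem_ker, commutatorHom_apply, commutatorElement_eq_one_iff_mul_comm,
    mem_centralizer_singleton_iff, eq_comm]

theorem range_commutatorHom_eq {p : ℕ} (hp : p.Prime) {x y : G}
    (hx : Nat.card (commutatorHom hZ x).range ∣ p) (hy : Nat.card (commutatorHom hZ y).range ∣ p)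
    (hxy : ⁅x, y⁆ ≠ 1) : (commutatorHom hZ x).range = (commutatorHom hZ y).range :=
  (eq_zpowers_of_card_dvd_prime hp hx (commutatorElement_mem_range_commutatorHom hZ x y) hxy).trans
    (eq_zpowers_of_card_dvd_prime hp hy
      (commutatorElement_mem_range_commutatorHom_right hZ x y) hxy).symm

theorem range_commutatorHom_le_sup (x x' : G) :
    (commutatorHom hZ x').range ≤
      (commutatorHom hZ x).range ⊔ (commutatorHom hZ (x * x')).range := by
  rintro _ ⟨y, rfl⟩
  have : ⁅x', y⁆ = ⁅x, y⁆⁻¹ * ⁅x * x', y⁆ := by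
    rw [commutatorElement_mul_left_of_central hZ, inv_mul_cancel_left]
  rw [commutatorHom_apply, this]
  exact mul_mem (inv_mem (mem_sup_left ⟨y, rfl⟩)) (mem_sup_right ⟨y, rfl⟩)

end CentralCommutators

namespace IsFactorization

variable {A B : Subgroup G}

theorem symm (h : IsFactorization A B) : IsFactorization B A := fun g => by
  obtain ⟨a, ha, b, hb, hab⟩ := h g⁻¹
  exact ⟨b⁻¹, inv_mem hb, a⁻¹, inv_mem ha, by rw [← mul_inv_rev, ← hab, inv_inv]⟩

theorem le_center (h : IsFactorization A B) {K : Subgroup G}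
    (hK : ∀ x, x ∈ A ∨ x ∈ B → K ≤ centralizer {x}) : K ≤ center G := by
  intro z hz
  refine mem_center_iff.mpr fun g => ?_
  obtain ⟨a, ha, b, hb, rfl⟩ := h g
  have hza := mem_centralizer_singleton_iff.mp (hK a (.inl ha) hz)
  have hzb := mem_centralizer_singleton_iff.mp (hK b (.inr hb) hz)
  rw [mul_assoc, ← hzb, ← mul_assoc, ← hza, mul_assoc]

theorem exists_commutatorElement_ne_one (hfact : IsFactorization A B)
    (hZ : commutator G ≤ center G) {a y : G} (h : ⁅a, y⁆ ≠ 1) :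
    ∃ x, (x ∈ A ∨ x ∈ B) ∧ ⁅a, x⁆ ≠ 1 := by
  obtain ⟨α, hα, β, hβ, rfl⟩ := hfact y
  rw [commutatorElement_mul_right_of_central hZ] at h
  by_cases hα1 : ⁅a, α⁆ = 1
  · exact ⟨β, .inr hβ, by rwa [hα1, one_mul] at h⟩
  · exact ⟨α, .inl hα, hα1⟩

theorem commutator_le_sup (hfact : IsFactorization A B) (hZ : commutator G ≤ center G)
    {C D : Subgroup G} (hC : ∀ a ∈ A, ∀ y, ⁅a, y⁆ ∈ C) (hD : ∀ b ∈ B, ∀ y, ⁅b, y⁆ ∈ D) :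
    commutator G ≤ C ⊔ D := by
  rw [commutator_def, commutator_le]
  rintro g - y -
  obtain ⟨a, ha, b, hb, rfl⟩ := hfact g
  rw [commutatorElement_mul_left_of_central hZ]
  exact mul_mem (mem_sup_left (hC a ha y)) (mem_sup_right (hD b hb y))

variable {p : ℕ}

/-- With `[g, G]` the range of `commutatorHom hZ g`: pick `x ∈ A ∪ B` with `⁅a, x⁆ ≠ 1`, so that
`[a, G] = [x, G]`. Either `⁅a', x⁆ ≠ 1` and `[a', G] = [x, G]` too, or `⁅a * a', x⁆ = ⁅a, x⁆ ≠ 1`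
and `[a', G] ≤ [a, G] ⊔ [a * a', G] = [a, G]`. -/
theorem range_commutatorHom_le_of_ne_bot (hfact : IsFactorization A B)
    (hZ : commutator G ≤ center G) (hp : p.Prime)
    (hV : ∀ x, x ∈ A ∨ x ∈ B → Nat.card (commutatorHom hZ x).range ∣ p)
    {a a' : G} (ha : a ∈ A) (ha' : a' ∈ A) (hne : (commutatorHom hZ a).range ≠ ⊥) :
    (commutatorHom hZ a').range ≤ (commutatorHom hZ a).range := by
  obtain ⟨_, ⟨y, rfl⟩, hy⟩ := (bot_or_exists_ne_one _).resolve_left hne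
  obtain ⟨x, hx, hax⟩ := hfact.exists_commutatorElement_ne_one hZ hy
  have hax' := range_commutatorHom_eq hZ hp (hV a (.inl ha)) (hV x hx) hax
  by_cases ha'x : ⁅a', x⁆ = 1
  · have haa'x : ⁅a * a', x⁆ ≠ 1 := by
      rwa [commutatorElement_mul_left_of_central hZ, ha'x, mul_one]
    have := range_commutatorHom_eq hZ hp (hV _ (.inl (mul_mem ha ha'))) (hV x hx) haa'x
    refine (range_commutatorHom_le_sup hZ a a').trans ?_
    rw [this, ← hax', sup_idem]
  · exact ((range_commutatorHom_eq hZ hp (hV a' (.inl ha')) (hV x hx) ha'x).trans hax'.symm).le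

theorem exists_forall_commutatorElement_mem (hfact : IsFactorization A B)
    (hZ : commutator G ≤ center G) (hp : p.Prime)
    (hV : ∀ x, x ∈ A ∨ x ∈ B → Nat.card (commutatorHom hZ x).range ∣ p) :
    ∃ C : Subgroup G, C ≤ center G ∧ Nat.card C ∣ p ∧ ∀ a ∈ A, ∀ y, ⁅a, y⁆ ∈ C := by
  by_cases h : ∃ a ∈ A, (commutatorHom hZ a).range ≠ ⊥
  · obtain ⟨a, ha, hne⟩ := h
    exact ⟨_, range_commutatorHom_le_center hZ a, hV a (.inl ha), fun a' ha' y =>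
      hfact.range_commutatorHom_le_of_ne_bot hZ hp hV ha ha' hne ⟨y, rfl⟩⟩
  · push Not at h
    exact ⟨⊥, bot_le, by simp, fun a ha y => h a ha ▸ ⟨y, rfl⟩⟩

end IsFactorization

end

/-- Knoche's theorem for factorised `p`-groups. -/
theorem stmt_0 (p : ℕ) (hp : p.Prime) (P : Type*) [Group P] [Finite P]
    (hPgrp : IsPGroup p P) (A B : Subgroup P)
    (hfact : IsFactorization A B)
    (hclass : ∀ x : P, (x ∈ A ∨ x ∈ B) → ¬ p ^ 2 ∣ classSize x) :
    commutator P ≤ frattini P ∧ frattini P ≤ Subgroup.center P ∧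
      IsElementaryAbelian p ↥(commutator P) ∧ Nat.card ↥(commutator P) ≤ p ^ 2 := by
  have : Fact p.Prime := ⟨hp⟩
  have : Group.IsNilpotent P := hPgrp.isNilpotent
  have hidx x (hx : x ∈ A ∨ x ∈ B) : (centralizer {x}).index ∣ p :=
    hPgrp.index_dvd_of_not_sq_dvd _ (hclass x hx)
  have hΦ : frattini P ≤ center P :=
    hfact.le_center fun x hx => frattini_le_of_index_dvd_prime hp (hidx x hx)
  have hZ : commutator P ≤ center P := commutator_le_frattini.trans hΦ
  have hV x (hx : x ∈ A ∨ x ∈ B) : Nat.card (commutatorHom hZ x).range ∣ p :=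
    card_range_commutatorHom hZ x ▸ hidx x hx
  obtain ⟨C, hCZ, hC, hAC⟩ := hfact.exists_forall_commutatorElement_mem hZ hp hV
  obtain ⟨D, -, hD, hBD⟩ :=
    hfact.symm.exists_forall_commutatorElement_mem hZ hp fun x hx => hV x hx.symm
  have hCD := hfact.commutator_le_sup hZ hAC hBD
  have := normal_of_le_center hCZ
  refine ⟨commutator_le_frattini, hΦ, isElementaryAbelian_of_le_center hp hZ fun w hw =>
    pow_eq_one_of_mem_sup hCZ (fun c => pow_eq_one_of_card_dvd hC)
      (fun d => pow_eq_one_of_card_dvd hD) (hCD hw), ?_⟩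
  calc Nat.card (commutator P) ≤ Nat.card ↥(C ⊔ D) := card_le_of_le hCD
    _ ≤ Nat.card C * Nat.card D := card_sup_le C D
    _ ≤ p ^ 2 := sq p ▸ Nat.mul_le_mul (Nat.le_of_dvd hp.pos hC) (Nat.le_of_dvd hp.pos hD)
end

section
/- Let G be a finite group, p a prime, and N an abelian minimal normal subgroup of G whose order is not divisible by p. Let K be the normal subgroup of G containing N·O_p(G) with K/(N·O_p(G)) = O_p(G/(N·O_p(G))), and suppose K/(N·O_p(G)) has order p. If P is a Sylow p-subgroup of K, then the centralizer of P in N is trivial, i.e. C_N(P) = 1. -/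
open Pointwise

/-!
Let `Q` be the image of `P` in `G`. Since `O_p(G)` is a normal `p`-subgroup of `K` it lies in `Q`,
and since `K / N·O_p(G)` has order `p` while `Q` has `p'`-index in `K`, we get `K = NQ`.
The subgroup `C_N(Q)` is normalized by `N` (which is abelian), by `Q`, hence by `K`, and by
`N_G(Q)`; the Frattini argument `G = N_G(Q) K` makes it normal in `G`. By minimality of `N`,
either `C_N(Q) = 1`, or `N` centralizes `Q`, in which case `Q` is normalized by `K = NQ`, hence
normal in `G`, so `Q ≤ O_p(G)` and `K ≤ N·O_p(G)`, contradicting `|K / N·O_p(G)| = p`.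
-/

namespace Subgroup

variable {G : Type*} [Group G]

theorem normalizer_le_normalizer_centralizer_inf (Q N : Subgroup G) [N.Normal] :
    normalizer (Q : Set G) ≤ normalizer ((centralizer (Q : Set G) ⊓ N : Subgroup G) : Set G) :=
  calc normalizer (Q : Set G)
      ≤ normalizer (centralizer (Q : Set G) : Set G) ⊓ normalizer (N : Set G) :=
        le_inf (le_normalizer_of_normal_subgroupOf (centralizer_le_normalizer _))
          le_normalizer_of_normal
    _ ≤ _ := inf_normalizer_le_normalizer_inf

theorem sup_le_normalizer_centralizer_inf (Q N : Subgroup G) [IsMulCommutative N] :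
    N ⊔ Q ≤ normalizer ((centralizer (Q : Set G) ⊓ N : Subgroup G) : Set G) := by
  refine sup_le ?_ ?_ |>.trans (centralizer_le_normalizer _)
  · exact (le_centralizer N).trans (centralizer_le inf_le_right)
  · exact le_centralizer_iff.mp inf_le_left

end Subgroup

namespace Sylow

open Subgroup

variable {G : Type*} [Group G] {p : ℕ} [Fact p.Prime]

/-- Frattini argument: `G = N_G(P) K` for a Sylow subgroup `P` of the normal subgroup `K`. -/
theorem normal_of_le_normalizer {K : Subgroup G} [K.Normal] [Finite (Sylow p K)] (P : Sylow p K)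
    {H : Subgroup G} (hK : K ≤ normalizer (H : Set G))
    (hP : normalizer (((P : Subgroup K).map K.subtype : Subgroup G) : Set G) ≤
      normalizer (H : Set G)) :
    H.Normal :=
  normalizer_eq_top_iff.mp <| top_le_iff.mp <| (normalizer_sup_eq_top P).ge.trans (sup_le hP hK)

theorem sup_eq_top_of_index_eq_pow [Finite G] (P : Sylow p G) {H : Subgroup G} {k : ℕ}
    (hH : H.index = p ^ k) : H ⊔ P = ⊤ := by
  have hdvd_pow : (H ⊔ P).index ∣ p ^ k := hH ▸ index_dvd_of_le le_sup_left
  obtain ⟨j, -, hj⟩ := (Nat.dvd_prime_pow Fact.out).mp hdvd_pow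
  have hdvd : (H ⊔ P).index ∣ (P : Subgroup G).index := index_dvd_of_le le_sup_right
  rcases j with _ | j
  · exact index_eq_one.mp hj
  · rw [hj] at hdvd
    exact absurd ((dvd_pow_self p j.succ_ne_zero).trans hdvd) P.not_dvd_index

theorem le_sup_map_subtype_of_relIndex_eq_pow {K H : Subgroup G} [Finite K] (P : Sylow p K)
    {k : ℕ} (hH : H.relIndex K = p ^ k) : K ≤ H ⊔ (P : Subgroup K).map K.subtype := by
  have htop := congrArg (map K.subtype) (P.sup_eq_top_of_index_eq_pow hH)
  rw [Subgroup.map_sup, subgroupOf_map_subtype, ← MonoidHom.range_eq_map, range_subtype]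
    at htop
  exact htop.ge.trans (sup_le_sup_right inf_le_left _)

end Sylow

theorem IsPGroup.le_map_subtype_sylow_of_normal {G : Type*} [Group G] {p : ℕ} [Fact p.Prime]
    {H K : Subgroup G} [H.Normal] (hH : IsPGroup p H) (hHK : H ≤ K) (P : Sylow p K) :
    H ≤ (P : Subgroup K).map K.subtype := by
  have hle : H.subgroupOf K ≤ P :=
    (hH.comap_of_injective K.subtype K.subtype_injective).le_sylow_of_normal P
  calc H = (H.subgroupOf K).map K.subtype := by
        rw [Subgroup.subgroupOf_map_subtype, inf_of_le_left hHK]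
    _ ≤ _ := Subgroup.map_mono hle

theorem stmt_12_general {G : Type*} [Group G] [Finite G] (p : ℕ) (hp : p.Prime)
    (N : Subgroup G) [N.Normal]
    (hNmin : N ≠ ⊥ ∧ ∀ L : Subgroup G, L.Normal → L ≤ N → L = ⊥ ∨ L = N)
    (hNab : ∀ a b : ↥N, a * b = b * a)
    (Op : Subgroup G) [Op.Normal] (hOp : IsPCore p Op)
    (K : Subgroup G) [K.Normal] (hNOpK : N ⊔ Op ≤ K)
    (hKord : Nat.card ↥(K.map (QuotientGroup.mk' (N ⊔ Op))) = p)
    (P : Sylow p ↥K) :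
    ∀ x : G, x ∈ N →
      x ∈ Subgroup.centralizer ((Subgroup.map K.subtype (P : Subgroup ↥K) : Subgroup G) : Set G) →
      x = 1 := by
  open Subgroup in
  have : Fact p.Prime := ⟨hp⟩
  have : IsMulCommutative N := ⟨⟨hNab⟩⟩
  set Q := (P : Subgroup K).map K.subtype
  have hindex : (N ⊔ Op).relIndex K = p := by
    rw [← hKord, ← relIndex_ker, QuotientGroup.ker_mk']
  have hOpQ : Op ≤ Q := hOp.2.1.le_map_subtype_sylow_of_normal (le_sup_right.trans hNOpK) P
  have hKNQ : K ≤ N ⊔ Q :=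
    (P.le_sup_map_subtype_of_relIndex_eq_pow (hindex.trans (pow_one p).symm)).trans
      (sup_le (sup_le_sup_left hOpQ N) le_sup_right)
  have hQ : ¬ Q.Normal := fun hQ ↦ by
    have hK : K ≤ N ⊔ Op := hKNQ.trans (sup_le_sup_left (hOp.2.2 Q hQ (P.2.map K.subtype)) N)
    exact hp.one_lt.ne' (hindex.symm.trans (relIndex_eq_one.mpr hK))
  have hC := P.normal_of_le_normalizer (hKNQ.trans (sup_le_normalizer_centralizer_inf Q N))
    (normalizer_le_normalizer_centralizer_inf Q N)
  intro x hxN hxQ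
  rcases hNmin.2 _ hC inf_le_right with hbot | hN
  · exact mem_bot.mp (hbot ▸ mem_inf.mpr ⟨hxQ, hxN⟩)
  · have hNQ : N ≤ centralizer (Q : Set G) := hN ▸ inf_le_left
    have hKQ : K ≤ normalizer (Q : Set G) :=
      hKNQ.trans (sup_le (hNQ.trans (centralizer_le_normalizer _)) le_normalizer)
    exact absurd (P.normal_of_le_normalizer hKQ le_rfl) hQ

/-- Proposition (2): if `K/(N·O_p(G)) = O_p(G/(N·O_p(G)))` has order `p`
and `P` is a Sylow `p`-subgroup of `K`, then `C_N(P) = 1`. -/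
theorem stmt_12 {G : Type*} [Group G] [Finite G] (p : ℕ) (hp : p.Prime)
    (N : Subgroup G) [N.Normal]
    (hNmin : N ≠ ⊥ ∧ ∀ L : Subgroup G, L.Normal → L ≤ N → L = ⊥ ∨ L = N)
    (hNab : ∀ a b : ↥N, a * b = b * a)
    (hNp' : ¬ p ∣ Nat.card ↥N)
    (Op : Subgroup G) [Op.Normal] (hOp : IsPCore p Op)
    (K : Subgroup G) [K.Normal] (hNOpK : N ⊔ Op ≤ K)
    (hKcore : IsPCore p (K.map (QuotientGroup.mk' (N ⊔ Op))))
    (hKord : Nat.card ↥(K.map (QuotientGroup.mk' (N ⊔ Op))) = p)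
    (P : Sylow p ↥K) :
    ∀ x : G, x ∈ N →
      x ∈ Subgroup.centralizer ((Subgroup.map K.subtype (P : Subgroup ↥K) : Subgroup G) : Set G) →
      x = 1 :=
  stmt_12_general p hp N hNmin hNab Op hOp K hNOpK hKord P
end
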